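/- arXiv:1207.2662 — 3 statements merged into one kernel-verified Lean document; each statement's English description precedes it below -/
import Mathlib

section
/- (Sharpness of the polynomial Bohnenblust–Hille exponent) Let m ≥ 2 be an integer and let q be a real number with 0 < q < 2m/(m+1). Then there is no constant C > 0 such that for every positive integer n and every m-homogeneous polynomial P(z) = ∑_{|α|=m} a_α z^α on ℂ^n one has (∑_{|α|=m} |a_α|^q)^{1/q} ≤ C · sup_{z ∈ D̄^n} |P(z)|. Equivalently, for every C > 0 there exist n and an m-homogeneous polynomial P on ℂ^n with (∑_{|α|=m} |a_α|^q)^{1/q} > C · sup_{z ∈ D̄^n} |P(z)|. -/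
/-!
Let `F i j = exp (2πi ij/ν)` be the Fourier matrix on `ZMod ν`, so `|F i j| = 1` and `Fᴴ F = ν • 1`.
In the `(k+1)ν` variables `z (t, i)` the `(k+1)`-homogeneous polynomial
`P z = ∑_{j : Fin (k+1) → ZMod ν} (∏_t F (j (t+1)) (j t)) ∏_t z (t, j t)` has `ν^(k+1)` unimodular
coefficients, and `P z = ∑_i v_k i` for `v_0 = z 0`, `v_(t+1) = z (t+1) * F v_t`. As `F / √ν` is
unitary and `|z| ≤ 1`, `‖v_t‖₂² ≤ ν^(t+1)`, so Cauchy–Schwarz gives `|P z| ≤ ν^((k+2)/2)`.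
A Bohnenblust–Hille inequality with exponent `q` would force `ν^((k+1)/q) ≤ C ν^((k+2)/2)` for
all `ν`, which fails for large `ν` exactly when `q < 2(k+1)/(k+2)`.
-/

/-- The supremum of `|f z|` over the closed unit polydisc in `ℂ^n`. -/
noncomputable def polydiscSup (n : ℕ) (f : (Fin n → ℂ) → ℂ) : ℝ :=
  sSup ((fun z => ‖f z‖) '' {z : Fin n → ℂ | ∀ i, ‖z i‖ ≤ 1})

open Finset Matrix Filter

theorem Matrix.sum_norm_sq_mulVec_of_conjTranspose_mul_self {ι : Type*} [Fintype ι]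
    [DecidableEq ι] (A : Matrix ι ι ℂ) {c : ℝ}
    (hA : Aᴴ * A = (c : ℂ) • 1) (v : ι → ℂ) :
    ∑ i, ‖(A *ᵥ v) i‖ ^ 2 = c * ∑ i, ‖v i‖ ^ 2 := by
  have hdot : ∀ x : ι → ℂ, star x ⬝ᵥ x = ((∑ i, ‖x i‖ ^ 2 : ℝ) : ℂ) := fun x => by
    push_cast
    exact sum_congr rfl fun i _ => Complex.conj_mul' (x i)
  have := hdot (A *ᵥ v)
  rw [star_mulVec, ← dotProduct_mulVec, mulVec_mulVec, hA, smul_mulVec, one_mulVec,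
    dotProduct_smul, hdot, smul_eq_mul] at this
  exact_mod_cast this.symm

namespace ZMod

variable (N : ℕ) [NeZero N]

noncomputable def dftMatrix : Matrix (ZMod N) (ZMod N) ℂ :=
  Matrix.of fun i j => stdAddChar (i * j)

variable {N}

theorem norm_dftMatrix_apply (i j : ZMod N) : ‖dftMatrix N i j‖ = 1 :=
  Circle.norm_coe _

theorem conjTranspose_dftMatrix_mul_self : (dftMatrix N)ᴴ * dftMatrix N = (N : ℂ) • 1 := by
  ext j k
  have hentry (i : ZMod N) :
      star (dftMatrix N i j) * dftMatrix N i k = stdAddChar (i * (k - j)) := by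
    rw [dftMatrix, of_apply, of_apply, Complex.star_def, ← AddChar.map_neg_eq_conj,
      ← AddChar.map_add_eq_mul]
    ring_nf
  rw [mul_apply, Matrix.smul_apply, one_apply, smul_eq_mul, mul_ite, mul_one, mul_zero]
  simp only [conjTranspose_apply, hentry]
  rw [AddChar.sum_mulShift _ (isPrimitive_stdAddChar N), ZMod.card]
  simp only [sub_eq_zero, eq_comm (a := k)]
  split_ifs <;> simp

end ZMod

theorem Fin.sum_pi_eq_sum_sum_snoc {ι M : Type*} [Fintype ι] [AddCommMonoid M] {n : ℕ}
    (f : (Fin (n + 1) → ι) → M) :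
    ∑ j, f j = ∑ i, ∑ j : Fin n → ι, f (Fin.snoc j i) := by
  rw [← (Fin.snocEquiv fun _ => ι).sum_comp, Fintype.sum_prod_type]
  rfl

theorem Function.Injective.sum_extend_zero {α β γ M : Type*} [Fintype α] [Zero γ]
    [AddCommMonoid M] {f : α → β} (hf : f.Injective) {s : Finset β} (hs : ∀ a, f a ∈ s)
    (c : α → γ) (F : β → γ → M) (hF : ∀ b, F b 0 = 0) :
    ∑ b ∈ s, F b (Function.extend f c 0 b) = ∑ a, F (f a) (c a) := by
  classical
  rw [← sum_subset (s₁ := univ.map ⟨f, hf⟩) (fun b hb => by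
      obtain ⟨a, -, rfl⟩ := mem_map.1 hb; exact hs a) fun b _ hb => ?_, sum_map]
  · exact sum_congr rfl fun a _ => by simp [hf.extend_apply]
  · rw [Function.extend_apply' (f := f) c 0 b fun ⟨a, ha⟩ =>
      hb (mem_map.2 ⟨a, mem_univ a, ha⟩)]
    exact hF b

namespace Matrix

variable {ι : Type*}

def pathWeight (A : Matrix ι ι ℂ) (k : ℕ) (j : Fin (k + 1) → ι) : ℂ :=
  ∏ t : Fin k, A (j t.succ) (j t.castSucc)

theorem norm_pathWeight {A : Matrix ι ι ℂ} (hA : ∀ i j, ‖A i j‖ = 1) {k : ℕ}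
    (j : Fin (k + 1) → ι) : ‖A.pathWeight k j‖ = 1 := by
  simp [pathWeight, hA]

variable [Fintype ι] (A : Matrix ι ι ℂ)

def pathVec : (k : ℕ) → (Fin (k + 1) → ι → ℂ) → ι → ℂ
  | 0, w => w 0
  | k + 1, w => w (Fin.last _) * (A *ᵥ pathVec k fun t => w t.castSucc)

theorem pathVec_apply (k : ℕ) (w : Fin (k + 1) → ι → ℂ) (i : ι) :
    A.pathVec k w i = ∑ j : Fin k → ι,
      A.pathWeight k (Fin.snoc j i) * ∏ t, w t (Fin.snoc (α := fun _ => ι) j i t) := by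
  induction k generalizing i with
  | zero => simp [pathVec, pathWeight, Fin.snoc]
  | succ k ih =>
    rw [pathVec, Pi.mul_apply, mulVec, dotProduct, Fin.sum_pi_eq_sum_sum_snoc, mul_sum]
    simp only [ih, mul_sum]
    refine sum_congr rfl fun i' _ => sum_congr rfl fun j _ => ?_
    simp only [pathWeight, Fin.prod_univ_castSucc, Fin.snoc_castSucc, Fin.snoc_last,
      Fin.succ_last, Fin.succ_castSucc]
    ring

theorem sum_pathVec (k : ℕ) (w : Fin (k + 1) → ι → ℂ) :
    ∑ i, A.pathVec k w i = ∑ j, A.pathWeight k j * ∏ t, w t (j t) := by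
  simp only [pathVec_apply, Fin.sum_pi_eq_sum_sum_snoc (n := k)]

variable [DecidableEq ι] {A}

theorem sum_norm_sq_pathVec_le (hA : Aᴴ * A = (Fintype.card ι : ℂ) • 1) {k : ℕ}
    {w : Fin (k + 1) → ι → ℂ} (hw : ∀ t i, ‖w t i‖ ≤ 1) :
    ∑ i, ‖A.pathVec k w i‖ ^ 2 ≤ (Fintype.card ι : ℝ) ^ (k + 1) := by
  induction k with
  | zero =>
    calc ∑ i, ‖w 0 i‖ ^ 2 ≤ ∑ _i : ι, (1 : ℝ) := by
          gcongr with i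
          exact pow_le_one₀ (norm_nonneg _) (hw 0 i)
      _ = _ := by simp
  | succ k ih =>
    have hA' : Aᴴ * A = ((Fintype.card ι : ℝ) : ℂ) • 1 := mod_cast hA
    calc ∑ i, ‖A.pathVec (k + 1) w i‖ ^ 2
        ≤ ∑ i, ‖(A *ᵥ A.pathVec k fun t => w t.castSucc) i‖ ^ 2 := by
          gcongr with i
          rw [pathVec, Pi.mul_apply, norm_mul]
          exact mul_le_of_le_one_left (norm_nonneg _) (hw _ i)
      _ = Fintype.card ι * ∑ i, ‖A.pathVec k (fun t => w t.castSucc) i‖ ^ 2 :=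
          sum_norm_sq_mulVec_of_conjTranspose_mul_self A hA' _
      _ ≤ Fintype.card ι * (Fintype.card ι : ℝ) ^ (k + 1) := by
          gcongr
          exact ih fun t => hw t.castSucc
      _ = (Fintype.card ι : ℝ) ^ (k + 2) := by ring

theorem norm_sq_sum_pathWeight_mul_prod_le (hA : Aᴴ * A = (Fintype.card ι : ℂ) • 1) {k : ℕ}
    {w : Fin (k + 1) → ι → ℂ} (hw : ∀ t i, ‖w t i‖ ≤ 1) :
    ‖∑ j, A.pathWeight k j * ∏ t, w t (j t)‖ ^ 2 ≤ (Fintype.card ι : ℝ) ^ (k + 2) := by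
  rw [← sum_pathVec]
  calc ‖∑ i, A.pathVec k w i‖ ^ 2 ≤ (∑ i, ‖A.pathVec k w i‖) ^ 2 := by
        gcongr
        exact norm_sum_le _ _
    _ ≤ Fintype.card ι * ∑ i, ‖A.pathVec k w i‖ ^ 2 := sq_sum_le_card_mul_sum_sq
    _ ≤ Fintype.card ι * (Fintype.card ι : ℝ) ^ (k + 1) := by
        gcongr
        exact sum_norm_sq_pathVec_le hA hw
    _ = (Fintype.card ι : ℝ) ^ (k + 2) := by ring

end Matrix

section GraphMonomial

variable {m N : ℕ} {ι : Type*} [DecidableEq ι] (e : Fin m × ι ≃ Fin N)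

def graphMonomial (j : Fin m → ι) : Fin N → ℕ :=
  fun p => if j (e.symm p).1 = (e.symm p).2 then 1 else 0

theorem graphMonomial_injective : (graphMonomial e).Injective := by
  intro j j' h
  funext t
  have := congrFun h (e (t, j t))
  simp only [graphMonomial, Equiv.symm_apply_apply, if_true] at this
  split_ifs at this with h'
  exact h'.symm

theorem graphMonomial_mem_antidiagonalTuple [Fintype ι] (j : Fin m → ι) :
    graphMonomial e j ∈ Finset.Nat.antidiagonalTuple N m := by
  rw [Finset.Nat.mem_antidiagonalTuple, ← e.sum_comp, Fintype.sum_prod_type]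
  simp [graphMonomial]

theorem prod_pow_graphMonomial [Fintype ι] (z : Fin N → ℂ) (j : Fin m → ι) :
    ∏ p, z p ^ graphMonomial e j p = ∏ t, z (e (t, j t)) := by
  rw [← e.prod_comp, Fintype.prod_prod_type]
  simp [graphMonomial]

end GraphMonomial

theorem exists_sum_rpow_eq_and_polydiscSup_le {ι : Type*} [Fintype ι] [DecidableEq ι]
    {A : Matrix ι ι ℂ} (hA : Aᴴ * A = (Fintype.card ι : ℂ) • 1) (hA₁ : ∀ i j, ‖A i j‖ = 1)
    (k : ℕ) {q : ℝ} (hq : q ≠ 0) :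
    ∃ a : (Fin ((k + 1) * Fintype.card ι) → ℕ) → ℂ,
      ∑ α ∈ Nat.antidiagonalTuple _ (k + 1), ‖a α‖ ^ q = (Fintype.card ι : ℝ) ^ (k + 1) ∧
      polydiscSup _ (fun z => ∑ α ∈ Nat.antidiagonalTuple _ (k + 1), a α * ∏ i, z i ^ α i)
        ≤ √((Fintype.card ι : ℝ) ^ (k + 2)) := by
  let e : Fin (k + 1) × ι ≃ Fin ((k + 1) * Fintype.card ι) :=
    Fintype.equivFinOfCardEq (by simp)
  have hinj := graphMonomial_injective e
  have hmem := graphMonomial_mem_antidiagonalTuple e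
  refine ⟨Function.extend (graphMonomial e) (A.pathWeight k) 0, ?_, ?_⟩
  · rw [hinj.sum_extend_zero hmem _ (fun _ x => ‖x‖ ^ q) fun _ => by simp [Real.zero_rpow hq]]
    simp [Matrix.norm_pathWeight hA₁]
  · refine Real.sSup_le ?_ (Real.sqrt_nonneg _)
    rintro _ ⟨z, hz, rfl⟩
    dsimp only
    rw [hinj.sum_extend_zero hmem _ (fun α x => x * ∏ i, z i ^ α i) fun _ => zero_mul _]
    simp only [prod_pow_graphMonomial]
    exact Real.le_sqrt_of_sq_le <| norm_sq_sum_pathWeight_mul_prod_le hA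
      (w := fun t i => z (e (t, i))) fun t i => hz (e (t, i))

theorem not_forall_natCast_rpow_le_const_mul_rpow {a b : ℝ} (hab : b < a) (C : ℝ) :
    ¬ ∀ ν : ℕ, 1 ≤ ν → (ν : ℝ) ^ a ≤ C * (ν : ℝ) ^ b := by
  intro h
  obtain ⟨ν, hνC, hν⟩ := (((tendsto_rpow_atTop (sub_pos.2 hab)).comp
    tendsto_natCast_atTop_atTop).eventually_gt_atTop C).and (eventually_ge_atTop 1) |>.exists
  have hν0 : (0 : ℝ) < ν := by exact_mod_cast hν
  have hpos : 0 < (ν : ℝ) ^ b := Real.rpow_pos_of_pos hν0 b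
  rw [Function.comp_apply, Real.rpow_sub hν0, lt_div_iff₀ hpos] at hνC
  exact (h ν hν).not_gt hνC

theorem polynomial_bohnenblust_hille_sharp_general (m : ℕ) (q : ℝ)
    (hq0 : 0 < q) (hq : q < 2 * m / (m + 1)) :
    ¬ ∃ C : ℝ, 0 < C ∧ ∀ n : ℕ, 1 ≤ n → ∀ a : (Fin n → ℕ) → ℂ,
        (∑ α ∈ Finset.Nat.antidiagonalTuple n m, ‖a α‖ ^ q) ^ (1 / q)
          ≤ C * polydiscSup n (fun z =>
              ∑ α ∈ Finset.Nat.antidiagonalTuple n m, a α * ∏ i, z i ^ α i) := by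
  rintro ⟨C, hC, hBH⟩
  obtain ⟨k, rfl⟩ : ∃ k, m = k + 1 :=
    Nat.exists_eq_succ_of_ne_zero fun h => by simp [h] at hq; linarith
  have hexp : ((k : ℝ) + 2) / 2 < (k + 1) / q := by
    push_cast at hq
    rw [div_lt_div_iff₀ two_pos hq0]
    rw [lt_div_iff₀ (by positivity)] at hq
    linarith
  refine not_forall_natCast_rpow_le_const_mul_rpow hexp C fun ν hν => ?_
  have : NeZero ν := ⟨by omega⟩
  obtain ⟨a, hsum, hsup⟩ := exists_sum_rpow_eq_and_polydiscSup_le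
    (by rw [ZMod.card ν]; exact ZMod.conjTranspose_dftMatrix_mul_self)
    ZMod.norm_dftMatrix_apply k hq0.ne'
  have hν0 : (0 : ℝ) ≤ ν := ν.cast_nonneg
  simp only [ZMod.card] at hsum hsup
  calc (ν : ℝ) ^ (((k : ℝ) + 1) / q)
      = (∑ α ∈ Finset.Nat.antidiagonalTuple _ (k + 1), ‖a α‖ ^ q) ^ (1 / q) := by
        rw [hsum, ← Real.rpow_natCast, ← Real.rpow_mul hν0]
        push_cast
        ring_nf
    _ ≤ C * polydiscSup _ _ := hBH _ (Nat.one_le_iff_ne_zero.2 (by positivity)) a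
    _ ≤ C * (ν : ℝ) ^ (((k : ℝ) + 2) / 2) := by
        gcongr
        rwa [Real.sqrt_eq_rpow, ← Real.rpow_natCast, ← Real.rpow_mul hν0, Nat.cast_add,
          Nat.cast_two, mul_one_div] at hsup

/-- **Sharpness of the polynomial Bohnenblust–Hille exponent.** For `m ≥ 2` and
`0 < q < 2m/(m+1)`, there is no constant `C > 0` such that for every `n ≥ 1` and every
`m`-homogeneous polynomial `P(z) = ∑_{|α| = m} a α • z ^ α` on `ℂ^n` one has
`(∑_{|α| = m} |a α| ^ q) ^ (1/q) ≤ C * sup_{z ∈ D̄^n} |P z|`. -/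
theorem polynomial_bohnenblust_hille_sharp (m : ℕ) (hm : 2 ≤ m) (q : ℝ)
    (hq0 : 0 < q) (hq : q < 2 * m / (m + 1)) :
    ¬ ∃ C : ℝ, 0 < C ∧ ∀ n : ℕ, 1 ≤ n → ∀ a : (Fin n → ℕ) → ℂ,
        (∑ α ∈ Finset.Nat.antidiagonalTuple n m, ‖a α‖ ^ q) ^ (1 / q)
          ≤ C * polydiscSup n (fun z =>
              ∑ α ∈ Finset.Nat.antidiagonalTuple n m, a α * ∏ i, z i ^ α i) :=
  polynomial_bohnenblust_hille_sharp_general m q hq0 hq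
end

section
/- (Sharpness of the multilinear Bohnenblust–Hille exponent) Let m ≥ 2 be an integer and let q be a real number with 0 < q < 2m/(m+1). Then there is no constant C > 0 such that for every positive integer n and every continuous m-linear form T : ℂ^n × ⋯ × ℂ^n → ℂ (each factor equipped with the sup norm) one has (∑_{i_1,…,i_m=1}^{n} |T(e_{i_1}, …, e_{i_m})|^q)^{1/q} ≤ C · sup { |T(z_1,…,z_m)| : z_1,…,z_m ∈ D̄^n }. -/
/-- The supremum of `|T (z 1, …, z m)|` over `m`-tuples of points of the closed unit
polydisc in `ℂ^n`. -/
noncomputable def multilinearPolydiscSup (m n : ℕ)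
    (T : ContinuousMultilinearMap ℂ (fun _ : Fin m => (Fin n → ℂ)) ℂ) : ℝ :=
  sSup ((fun z => ‖T z‖) ''
    {z : Fin m → (Fin n → ℂ) | ∀ k i, ‖z k i‖ ≤ 1})

/-! The form `T(z) = ∑ᵢ ω^(i₁i₂ + ⋯ + i_{m-1}i_m) z₁(i₁)⋯z_m(i_m)`, with `ω` a primitive `n`-th
root of unity, has `n^m` unimodular coefficients, so the left-hand side equals `n^(m/q)`. Summing
out one variable at a time, each step applies the Fourier matrix, which multiplies `ℓ²`-norms by
`√n`, and then multiplies pointwise by a vector of the polydisc; hence `|T(z)| ≤ n^((m+1)/2)`.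
Since `m/q > (m+1)/2` exactly when `q < 2m/(m+1)`, no constant survives `n → ∞`. -/

open Finset Matrix

namespace Matrix

structure IsComplexHadamard {ι : Type*} [Fintype ι] [DecidableEq ι] (A : Matrix ι ι ℂ) :
    Prop where
  norm_apply : ∀ i j, ‖A i j‖ = 1
  conjTranspose_mul : Aᴴ * A = (Fintype.card ι : ℂ) • 1

namespace IsComplexHadamard

variable {ι κ : Type*} [Fintype ι] [DecidableEq ι] [Fintype κ] [DecidableEq κ]
  {A : Matrix ι ι ℂ}

lemma submatrix (hA : A.IsComplexHadamard) (e : κ ≃ ι) :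
    (A.submatrix e e).IsComplexHadamard where
  norm_apply i j := hA.norm_apply (e i) (e j)
  conjTranspose_mul := by
    rw [conjTranspose_submatrix, submatrix_mul_equiv, hA.conjTranspose_mul, Fintype.card_congr e]
    ext i j
    simp [one_apply]

lemma sum_norm_mulVec_sq (hA : A.IsComplexHadamard) (v : ι → ℂ) :
    ∑ j, ‖(A *ᵥ v) j‖ ^ 2 = Fintype.card ι * ∑ j, ‖v j‖ ^ 2 := by
  have h (w : ι → ℂ) : ((∑ j, ‖w j‖ ^ 2 : ℝ) : ℂ) = star w ⬝ᵥ w := by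
    simp [dotProduct, Complex.conj_mul']
  apply Complex.ofReal_injective
  rw [Complex.ofReal_mul, h, h, star_mulVec, ← dotProduct_mulVec, mulVec_mulVec,
    hA.conjTranspose_mul, smul_mulVec, one_mulVec, dotProduct_smul]
  simp

end IsComplexHadamard

end Matrix

namespace AddChar

variable {R : Type*} [CommRing R] [Fintype R] [DecidableEq R]

def fourierMatrix (ψ : AddChar R ℂ) : Matrix R R ℂ := Matrix.of fun a b => ψ (a * b)

lemma IsPrimitive.isComplexHadamard_fourierMatrix {ψ : AddChar R ℂ} (hψ : ψ.IsPrimitive) :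
    ψ.fourierMatrix.IsComplexHadamard where
  norm_apply _ _ := ψ.norm_apply _
  conjTranspose_mul := by
    refine Matrix.ext fun a b => ?_
    rw [Matrix.smul_apply, Matrix.one_apply]
    simp only [Matrix.mul_apply, Matrix.conjTranspose_apply, fourierMatrix, Matrix.of_apply,
      RCLike.star_def, ← map_neg_eq_conj, ← map_add_eq_mul]
    have (j : R) : -(j * a) + j * b = j * (b - a) := by ring
    simp_rw [this, sum_mulShift _ hψ, sub_eq_zero, eq_comm (a := b)]
    simp

end AddChar

theorem Matrix.exists_isComplexHadamard (n : ℕ) :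
    ∃ A : Matrix (Fin n) (Fin n) ℂ, A.IsComplexHadamard := by
  rcases n with _ | n
  · exact ⟨0, fun i => i.elim0, Subsingleton.elim _ _⟩
  · exact ⟨_, (ZMod.isPrimitive_stdAddChar (n + 1)).isComplexHadamard_fourierMatrix.submatrix
      (ZMod.finEquiv (n + 1)).toEquiv⟩

namespace ContinuousMultilinearMap

variable {𝕜 : Type*} [NontriviallyNormedField 𝕜] {κ ι : Type*} [Fintype κ] [DecidableEq κ]
  [Fintype ι]

noncomputable def ofCoeffs (c : (κ → ι) → 𝕜) :
    ContinuousMultilinearMap 𝕜 (fun _ : κ => ι → 𝕜) 𝕜 :=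
  ∑ i, c i • (ContinuousMultilinearMap.mkPiAlgebra 𝕜 κ 𝕜).compContinuousLinearMap
    fun k => ContinuousLinearMap.proj (i k)

lemma ofCoeffs_apply (c : (κ → ι) → 𝕜) (z : κ → ι → 𝕜) :
    ofCoeffs c z = ∑ i, c i * ∏ k, z k (i k) := by
  simp [ofCoeffs]

lemma ofCoeffs_apply_single [DecidableEq ι] (c : (κ → ι) → 𝕜) (j : κ → ι) :
    ofCoeffs c (fun k => Pi.single (j k) 1) = c j := by
  simp [ofCoeffs_apply, Pi.single_apply, prod_boole, ← funext_iff]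

end ContinuousMultilinearMap

namespace Matrix

variable {ι : Type*} (A : Matrix ι ι ℂ)

def chainCoeff {t : ℕ} (i : Fin (t + 1) → ι) : ℂ := ∏ k : Fin t, A (i k.castSucc) (i k.succ)

lemma chainCoeff_cons {t : ℕ} (j : ι) (i : Fin (t + 1) → ι) :
    A.chainCoeff (Fin.cons j i) = A j (i 0) * A.chainCoeff i := by
  simp [chainCoeff, Fin.prod_univ_succ]

variable [Fintype ι]

noncomputable def chainForm (t : ℕ) :
    ContinuousMultilinearMap ℂ (fun _ : Fin (t + 1) => ι → ℂ) ℂ :=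
  ContinuousMultilinearMap.ofCoeffs A.chainCoeff

def chainVec : (t : ℕ) → (Fin (t + 1) → ι → ℂ) → ι → ℂ
  | 0, z => z 0
  | t + 1, z => z 0 * (A *ᵥ chainVec t (Fin.tail z))

lemma chainVec_apply (t : ℕ) (z : Fin (t + 1) → ι → ℂ) (j : ι) :
    A.chainVec t z j =
      ∑ i : Fin t → ι,
        A.chainCoeff (Fin.cons j i) * ∏ k, z k ((Fin.cons j i : Fin (t + 1) → ι) k) := by
  induction t generalizing j with
  | zero => simp [chainVec, chainCoeff]
  | succ t ih =>
    rw [← (Fin.consEquiv fun _ => ι).sum_comp, Fintype.sum_prod_type]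
    simp only [chainVec, Pi.mul_apply, mulVec, dotProduct, ih, Fin.consEquiv, Equiv.coe_fn_mk,
      chainCoeff_cons, Fin.prod_univ_succ, Fin.cons_zero, Fin.cons_succ, Fin.tail, mul_sum]
    exact sum_congr rfl fun _ _ => sum_congr rfl fun _ _ => by ring

lemma chainForm_apply (t : ℕ) (z : Fin (t + 1) → ι → ℂ) :
    A.chainForm t z = ∑ j, A.chainVec t z j := by
  rw [chainForm, ContinuousMultilinearMap.ofCoeffs_apply, ← (Fin.consEquiv fun _ => ι).sum_comp,
    Fintype.sum_prod_type]
  simp [chainVec_apply, Fin.consEquiv]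

namespace IsComplexHadamard

variable [DecidableEq ι] {A}

lemma norm_chainCoeff (hA : A.IsComplexHadamard) {t : ℕ} (i : Fin (t + 1) → ι) :
    ‖A.chainCoeff i‖ = 1 := by
  simp [chainCoeff, hA.norm_apply]

lemma sum_rpow_norm_chainForm_single (hA : A.IsComplexHadamard) (t : ℕ) (q : ℝ) :
    (∑ i : Fin (t + 1) → ι, ‖A.chainForm t (fun k => Pi.single (i k) 1)‖ ^ q) ^ (1 / q)
      = (Fintype.card ι : ℝ) ^ (((t : ℝ) + 1) / q) := by
  simp only [chainForm, ContinuousMultilinearMap.ofCoeffs_apply_single, hA.norm_chainCoeff,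
    Real.one_rpow, sum_const, card_univ, Fintype.card_fun, Fintype.card_fin, nsmul_eq_mul,
    mul_one, Nat.cast_pow]
  rw [← Real.rpow_natCast, ← Real.rpow_mul (Nat.cast_nonneg _)]
  push_cast
  ring_nf

lemma sum_norm_chainVec_sq_le (hA : A.IsComplexHadamard) (t : ℕ) (z : Fin (t + 1) → ι → ℂ)
    (hz : ∀ k j, ‖z k j‖ ≤ 1) :
    ∑ j, ‖A.chainVec t z j‖ ^ 2 ≤ Fintype.card ι ^ (t + 1) := by
  induction t with
  | zero =>
    simpa [chainVec, card_univ] using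
      sum_le_sum fun j (_ : j ∈ univ) => pow_le_one₀ (norm_nonneg _) (hz 0 j)
  | succ t ih =>
    calc ∑ j, ‖A.chainVec (t + 1) z j‖ ^ 2
        = ∑ j, ‖z 0 j‖ ^ 2 * ‖(A *ᵥ A.chainVec t (Fin.tail z)) j‖ ^ 2 := by
          simp [chainVec, mul_pow]
      _ ≤ ∑ j, ‖(A *ᵥ A.chainVec t (Fin.tail z)) j‖ ^ 2 :=
          sum_le_sum fun j _ =>
            mul_le_of_le_one_left (by positivity) (pow_le_one₀ (norm_nonneg _) (hz 0 j))
      _ = Fintype.card ι * ∑ j, ‖A.chainVec t (Fin.tail z) j‖ ^ 2 := hA.sum_norm_mulVec_sq _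
      _ ≤ Fintype.card ι * Fintype.card ι ^ (t + 1) :=
          mul_le_mul_of_nonneg_left (ih _ fun k j => hz k.succ j) (by positivity)
      _ = Fintype.card ι ^ (t + 2) := by ring

lemma norm_chainForm_sq_le (hA : A.IsComplexHadamard) (t : ℕ) (z : Fin (t + 1) → ι → ℂ)
    (hz : ∀ k j, ‖z k j‖ ≤ 1) :
    ‖A.chainForm t z‖ ^ 2 ≤ Fintype.card ι ^ (t + 2) := by
  rw [chainForm_apply]
  calc ‖∑ j, A.chainVec t z j‖ ^ 2 ≤ (∑ j, ‖A.chainVec t z j‖) ^ 2 := by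
        gcongr; exact norm_sum_le _ _
    _ ≤ Fintype.card ι * ∑ j, ‖A.chainVec t z j‖ ^ 2 := sq_sum_le_card_mul_sum_sq
    _ ≤ Fintype.card ι * Fintype.card ι ^ (t + 1) :=
        mul_le_mul_of_nonneg_left (hA.sum_norm_chainVec_sq_le t z hz) (by positivity)
    _ = Fintype.card ι ^ (t + 2) := by ring

end IsComplexHadamard

end Matrix

lemma Matrix.IsComplexHadamard.multilinearPolydiscSup_chainForm_le {n : ℕ}
    {A : Matrix (Fin n) (Fin n) ℂ} (hA : A.IsComplexHadamard) (t : ℕ) :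
    multilinearPolydiscSup (t + 1) n (A.chainForm t) ≤ (n : ℝ) ^ (((t : ℝ) + 2) / 2) := by
  have hsqrt : (n : ℝ) ^ (((t : ℝ) + 2) / 2) = √((n : ℝ) ^ (t + 2)) := by
    rw [Real.sqrt_eq_rpow, ← Real.rpow_natCast, ← Real.rpow_mul (Nat.cast_nonneg n)]
    push_cast
    ring_nf
  refine Real.sSup_le ?_ (by positivity)
  rintro _ ⟨z, hz, rfl⟩
  rw [hsqrt, Real.le_sqrt (norm_nonneg _) (by positivity)]
  simpa using hA.norm_chainForm_sq_le t z hz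

lemma exists_nat_mul_rpow_lt_rpow (C : ℝ) {a b : ℝ} (hab : b < a) :
    ∃ n : ℕ, 1 ≤ n ∧ C * (n : ℝ) ^ b < (n : ℝ) ^ a := by
  have hlim := (tendsto_rpow_atTop (sub_pos.mpr hab)).comp tendsto_natCast_atTop_atTop
  obtain ⟨n, hn, hC⟩ := ((tendsto_natCast_atTop_atTop (R := ℝ)).eventually_ge_atTop 1 |>.and
    (hlim.eventually_gt_atTop C)).exists
  have hn0 : (0 : ℝ) < n := by linarith
  refine ⟨n, by exact_mod_cast hn, ?_⟩
  calc C * (n : ℝ) ^ b < (n : ℝ) ^ (a - b) * (n : ℝ) ^ b :=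
        mul_lt_mul_of_pos_right hC (Real.rpow_pos_of_pos hn0 b)
    _ = (n : ℝ) ^ a := by rw [← Real.rpow_add hn0, sub_add_cancel]

theorem multilinear_bohnenblust_hille_sharp_general (m : ℕ) (q : ℝ)
    (hq0 : 0 < q) (hq : q < 2 * m / (m + 1)) :
    ¬ ∃ C : ℝ, 0 < C ∧ ∀ n : ℕ, 1 ≤ n →
        ∀ T : ContinuousMultilinearMap ℂ (fun _ : Fin m => (Fin n → ℂ)) ℂ,
          (∑ i : Fin m → Fin n,
              ‖T (fun k => Pi.single (i k) 1)‖ ^ q) ^ (1 / q)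
            ≤ C * multilinearPolydiscSup m n T := by
  rintro ⟨C, hC, hBH⟩
  have hm : m ≠ 0 := by
    rintro rfl
    norm_num at hq
    linarith
  obtain ⟨t, rfl⟩ := Nat.exists_eq_add_one_of_ne_zero hm
  have hexp : ((t : ℝ) + 2) / 2 < ((t : ℝ) + 1) / q := by
    push_cast at hq
    rw [lt_div_iff₀ (by positivity)] at hq
    rw [div_lt_div_iff₀ two_pos hq0]
    linarith
  obtain ⟨n, hn, hlt⟩ := exists_nat_mul_rpow_lt_rpow C hexp
  obtain ⟨A, hA⟩ := Matrix.exists_isComplexHadamard n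
  have hlower := hBH n hn (A.chainForm t)
  rw [hA.sum_rpow_norm_chainForm_single, Fintype.card_fin] at hlower
  have hupper := mul_le_mul_of_nonneg_left (hA.multilinearPolydiscSup_chainForm_le t) hC.le
  linarith

/-- **Sharpness of the multilinear Bohnenblust–Hille exponent.** For `m ≥ 2` and
`0 < q < 2m/(m+1)`, there is no constant `C > 0` such that for every `n ≥ 1` and every
continuous `m`-linear form `T : ℂ^n × ⋯ × ℂ^n → ℂ` (sup norm on each factor) one has
`(∑_{i₁,…,i_m} |T (e_{i₁}, …, e_{i_m})| ^ q) ^ (1/q) ≤ C * sup_{z ∈ (D̄^n)^m} |T z|`. -/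
theorem multilinear_bohnenblust_hille_sharp (m : ℕ) (hm : 2 ≤ m) (q : ℝ)
    (hq0 : 0 < q) (hq : q < 2 * m / (m + 1)) :
    ¬ ∃ C : ℝ, 0 < C ∧ ∀ n : ℕ, 1 ≤ n →
        ∀ T : ContinuousMultilinearMap ℂ (fun _ : Fin m => (Fin n → ℂ)) ℂ,
          (∑ i : Fin m → Fin n,
              ‖T (fun k => Pi.single (i k) 1)‖ ^ q) ^ (1 / q)
            ≤ C * multilinearPolydiscSup m n T :=
  multilinear_bohnenblust_hille_sharp_general m q hq0 hq
end

section
/- (Multilinear Bohnenblust–Hille implies polynomial Bohnenblust–Hille) Let m be a positive integer and q > 0. Suppose there exists a constant C > 0 such that for every positive integer n and every continuous m-linear form T : ℂ^n × ⋯ × ℂ^n → ℂ (with each factor carrying the sup norm) one has (∑_{i_1,…,i_m=1}^{n} |T(e_{i_1},…,e_{i_m})|^q)^{1/q} ≤ C · sup { |T(z_1,…,z_m)| : z_1,…,z_m ∈ D̄^n }. Then there exists a constant C' > 0 such that for every positive integer n and every m-homogeneous polynomial P(z) = ∑_{|α|=m} a_α z^α on ℂ^n one has (∑_{|α|=m}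 |a_α|^q)^{1/q} ≤ C' · sup_{z ∈ D̄^n} |P(z)|. -/
open Finset

section MultiIndex

variable {ι κ : Type*} [Fintype ι] [DecidableEq κ]

def multiIndex (i : ι → κ) (j : κ) : ℕ := #{k | i k = j}

theorem prod_comp_eq_prod_pow_multiIndex [Fintype κ] {M : Type*} [CommMonoid M]
    (g : κ → M) (i : ι → κ) : ∏ k, g (i k) = ∏ j, g j ^ multiIndex i j := by
  rw [← prod_fiberwise' univ i g]
  simp [multiIndex]

theorem sum_multiIndex [Fintype κ] (i : ι → κ) : ∑ j, multiIndex i j = Fintype.card ι := by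
  simp_rw [multiIndex, ← card_eq_sum_card_fiberwise (fun k _ => mem_univ (i k)), card_univ]

theorem multiIndex_comp_perm (i : ι → κ) (σ : Equiv.Perm ι) :
    multiIndex (i ∘ σ) = multiIndex i := by
  ext j
  exact card_bijective σ σ.bijective (by simp)

theorem multiIndex_eq_zero_of_notMem_range {i : ι → κ} {j : κ} (hj : j ∉ Set.range i) :
    multiIndex i j = 0 := by
  simpa [multiIndex, filter_eq_empty_iff] using hj

theorem multiIndex_perm [DecidableEq ι] (σ : Equiv.Perm ι) (j : ι) : multiIndex σ j = 1 := by
  rw [← Function.id_comp σ, multiIndex_comp_perm]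
  simp [multiIndex, filter_eq']

theorem exists_perm_comp_eq_of_multiIndex_eq {i i' : ι → κ}
    (h : multiIndex i = multiIndex i') : ∃ σ : Equiv.Perm ι, i' ∘ σ = i := by
  have hfiber : ∀ j, {k // i k = j} ≃ {k // i' k = j} := fun j =>
    Fintype.equivOfCardEq (by simpa [Fintype.card_subtype, multiIndex] using congrFun h j)
  refine ⟨(Equiv.sigmaFiberEquiv i).symm.trans
    ((Equiv.sigmaCongrRight hfiber).trans (Equiv.sigmaFiberEquiv i')), ?_⟩
  ext k
  exact (hfiber (i k) ⟨k, rfl⟩).2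

theorem exists_multiIndex_eq [Fintype κ] (α : κ → ℕ) (hα : ∑ j, α j = Fintype.card ι) :
    ∃ i : ι → κ, multiIndex i = α := by
  obtain ⟨e⟩ : Nonempty (ι ≃ Σ j, Fin (α j)) :=
    Fintype.card_eq.mp (by rw [Fintype.card_sigma]; simp [hα])
  refine ⟨fun k => (e k).1, funext fun j => ?_⟩
  rw [multiIndex, ← Fintype.card_subtype]
  simpa using Fintype.card_congr ((e.subtypeEquiv fun k => Iff.rfl).trans (Equiv.sigmaSubtype j))

theorem card_multiIndex_fiber_le [DecidableEq ι] [Fintype κ] (α : κ → ℕ) :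
    #{i : ι → κ | multiIndex i = α} ≤ (Fintype.card ι).factorial := by
  rcases Finset.eq_empty_or_nonempty {i : ι → κ | multiIndex i = α} with h | ⟨i₀, hi₀⟩
  · simp [h]
  calc #{i : ι → κ | multiIndex i = α}
      ≤ #(univ.image fun σ : Equiv.Perm ι => i₀ ∘ σ) := by
        refine card_le_card fun i hi => ?_
        obtain ⟨σ, hσ⟩ := exists_perm_comp_eq_of_multiIndex_eq
          ((mem_filter.mp hi).2.trans (mem_filter.mp hi₀).2.symm)
        exact mem_image.mpr ⟨σ, mem_univ _, hσ⟩
    _ ≤ (Fintype.card ι).factorial := card_image_le.trans (by simp [Fintype.card_perm])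

theorem multiIndex_mem_antidiagonalTuple {m n : ℕ} (i : Fin m → Fin n) :
    multiIndex i ∈ Nat.antidiagonalTuple n m :=
  Nat.mem_antidiagonalTuple.mpr (by simpa using sum_multiIndex i)

end MultiIndex

def boolSign {R : Type*} [Ring R] (b : Bool) : R := if b then 1 else -1

theorem sum_boolSign_pow {R : Type*} [Ring R] (e : ℕ) :
    ∑ b : Bool, (boolSign b : R) ^ e = 1 + (-1) ^ e := by
  simp [boolSign]

theorem norm_boolSign {R : Type*} [NormedRing R] [NormOneClass R] (b : Bool) :
    ‖(boolSign b : R)‖ = 1 := by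
  cases b <;> simp [boolSign]

section Polarization

variable {ι : Type*} [Fintype ι] [DecidableEq ι]

theorem sum_prod_boolSign_mul_prod_boolSign_comp {R : Type*} [CommRing R] (f : ι → ι) :
    ∑ ε : ι → Bool, (∏ k, (boolSign (ε k) : R)) * ∏ k, boolSign (ε (f k)) =
      if f.Bijective then 2 ^ Fintype.card ι else 0 := by
  have hsplit : ∀ ε : ι → Bool, (∏ k, (boolSign (ε k) : R)) * ∏ k, boolSign (ε (f k)) =
      ∏ j, boolSign (ε j) ^ (1 + multiIndex f j) := by
    intro ε
    rw [prod_comp_eq_prod_pow_multiIndex (fun j => (boolSign (ε j) : R)) f, ← prod_mul_distrib]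
    simp only [pow_add, pow_one]
  rw [Fintype.sum_congr _ _ hsplit,
    ← Fintype.prod_sum fun j (b : Bool) => (boolSign b : R) ^ (1 + multiIndex f j)]
  simp only [sum_boolSign_pow]
  split_ifs with hf
  · have hone : ∀ j, multiIndex f j = 1 := multiIndex_perm (Equiv.ofBijective f hf)
    simp [hone, one_add_one_eq_two]
  · obtain ⟨j, hj⟩ : ∃ j, j ∉ Set.range f := by
      by_contra! h
      exact hf (Finite.surjective_iff_bijective.mp h)
    exact prod_eq_zero (mem_univ j) (by simp [multiIndex_eq_zero_of_notMem_range hj])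

theorem card_filter_bijective : #{f : ι → ι | f.Bijective} = (Fintype.card ι).factorial := by
  rw [← Fintype.card_subtype, Fintype.card_congr Equiv.bijectiveEquiv,
    Fintype.card_equiv (.refl ι)]

theorem MultilinearMap.polarization {R M N : Type*} [CommRing R] [AddCommGroup M] [Module R M]
    [AddCommGroup N] [Module R N] (T : MultilinearMap R (fun _ : ι => M) N)
    (hT : ∀ (σ : Equiv.Perm ι) (x : ι → M), T (x ∘ σ) = T x) (x : ι → M) :
    ∑ ε : ι → Bool, (∏ k, (boolSign (ε k) : R)) • T (fun _ => ∑ j, (boolSign (ε j) : R) • x j) =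
      ((2 ^ Fintype.card ι * (Fintype.card ι).factorial : ℕ) : R) • T x := by
  have hexpand : ∀ ε : ι → Bool, T (fun _ => ∑ j, (boolSign (ε j) : R) • x j) =
      ∑ f : ι → ι, (∏ k, (boolSign (ε (f k)) : R)) • T (x ∘ f) := by
    intro ε
    rw [T.map_sum]
    exact sum_congr rfl fun f _ => T.map_smul_univ _ _
  have hsymm : ∀ f : ι → ι, f.Bijective → T (x ∘ f) = T x :=
    fun f hf => hT (Equiv.ofBijective f hf) x
  calc _ = ∑ f : ι → ι, (∑ ε : ι → Bool, (∏ k, (boolSign (ε k) : R)) *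
          ∏ k, boolSign (ε (f k))) • T (x ∘ f) := by
        simp_rw [hexpand, smul_sum, smul_smul, sum_smul]
        exact sum_comm
    _ = ∑ f : ι → ι, if f.Bijective then (2 ^ Fintype.card ι : R) • T x else 0 := by
        refine sum_congr rfl fun f _ => ?_
        rw [sum_prod_boolSign_mul_prod_boolSign_comp]
        split_ifs with hf
        · rw [hsymm f hf]
        · exact zero_smul _ _
    _ = _ := by
        rw [sum_ite, sum_const, sum_const_zero, add_zero, card_filter_bijective,
          ← Nat.cast_smul_eq_nsmul R, smul_smul]
        push_cast
        ring_nf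

theorem MultilinearMap.factorial_mul_norm_le_of_norm_diag_le [Nonempty ι] {𝕜 E F : Type*}
    [RCLike 𝕜] [NormedAddCommGroup E] [NormedSpace 𝕜 E] [NormedAddCommGroup F] [NormedSpace 𝕜 F]
    (T : MultilinearMap 𝕜 (fun _ : ι => E) F)
    (hT : ∀ (σ : Equiv.Perm ι) (x : ι → E), T (x ∘ σ) = T x)
    {B : ℝ} (hB : ∀ v : E, ‖v‖ ≤ 1 → ‖T (fun _ => v)‖ ≤ B) {x : ι → E} (hx : ∀ k, ‖x k‖ ≤ 1) :
    (Fintype.card ι).factorial * ‖T x‖ ≤ Fintype.card ι ^ Fintype.card ι * B := by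
  set m := Fintype.card ι
  have hm : (0 : ℝ) < m := Nat.cast_pos.mpr Fintype.card_pos
  have hdiag : ∀ v : E, ‖v‖ ≤ m → ‖T (fun _ => v)‖ ≤ m ^ m * B := by
    intro v hv
    have hscale := T.map_smul_univ (fun _ => (m : 𝕜)) (fun _ => (m : 𝕜)⁻¹ • v)
    have hm' : (m : 𝕜) ≠ 0 := Nat.cast_ne_zero.mpr Fintype.card_ne_zero
    simp only [smul_inv_smul₀ hm', prod_const, card_univ] at hscale
    rw [hscale, norm_smul, norm_pow, RCLike.norm_natCast]
    refine mul_le_mul_of_nonneg_left (hB _ ?_) (by positivity)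
    rw [norm_smul, norm_inv, RCLike.norm_natCast]
    exact inv_mul_le_one_of_le₀ hv hm.le
  have hsum : ∀ ε : ι → Bool, ‖∑ j, (boolSign (ε j) : 𝕜) • x j‖ ≤ m := fun ε =>
    calc _ ≤ ∑ j, ‖(boolSign (ε j) : 𝕜) • x j‖ := norm_sum_le _ _
      _ ≤ ∑ _j : ι, (1 : ℝ) := sum_le_sum fun j _ => by
            rw [norm_smul, norm_boolSign, one_mul]
            exact hx j
      _ = m := by simp [m]
  have key : ((2 ^ m * m.factorial : ℕ) : ℝ) * ‖T x‖ ≤ 2 ^ m * (m ^ m * B) :=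
    calc _ = ‖((2 ^ m * m.factorial : ℕ) : 𝕜) • T x‖ := by rw [norm_smul, RCLike.norm_natCast]
      _ = ‖∑ ε : ι → Bool, (∏ k, (boolSign (ε k) : 𝕜)) •
            T (fun _ => ∑ j, (boolSign (ε j) : 𝕜) • x j)‖ := by rw [T.polarization hT]
      _ ≤ ∑ ε : ι → Bool, ‖(∏ k, (boolSign (ε k) : 𝕜)) •
            T (fun _ => ∑ j, (boolSign (ε j) : 𝕜) • x j)‖ := norm_sum_le _ _
      _ ≤ ∑ _ε : ι → Bool, (m : ℝ) ^ m * B := sum_le_sum fun ε _ => by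
            rw [norm_smul, norm_prod]
            simpa [norm_boolSign] using hdiag _ (hsum ε)
      _ = 2 ^ m * (m ^ m * B) := by simp [m]
  push_cast at key
  exact le_of_mul_le_mul_left (by linarith) (by positivity : (0 : ℝ) < 2 ^ m)

end Polarization

section CoeffForm

variable {𝕜 ι κ : Type*} [Fintype ι] [DecidableEq ι] [Fintype κ]

def coeffForm [NontriviallyNormedField 𝕜] (c : (ι → κ) → 𝕜) :
    ContinuousMultilinearMap 𝕜 (fun _ : ι => κ → 𝕜) 𝕜 :=
  ∑ i, c i • (ContinuousMultilinearMap.mkPiAlgebra 𝕜 ι 𝕜).compContinuousLinearMap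
    fun k => ContinuousLinearMap.proj (i k)

variable [NontriviallyNormedField 𝕜]

theorem coeffForm_apply (c : (ι → κ) → 𝕜) (z : ι → κ → 𝕜) :
    coeffForm c z = ∑ i, c i * ∏ k, z k (i k) := by
  simp [coeffForm]

theorem coeffForm_single [DecidableEq κ] (c : (ι → κ) → 𝕜) (i : ι → κ) :
    coeffForm c (fun k => Pi.single (i k) 1) = c i := by
  simp [coeffForm_apply, Pi.single_apply, prod_boole, ← funext_iff]

theorem coeffForm_comp_perm {c : (ι → κ) → 𝕜} (hc : ∀ (σ : Equiv.Perm ι) i, c (i ∘ σ) = c i)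
    (σ : Equiv.Perm ι) (z : ι → κ → 𝕜) : coeffForm c (z ∘ σ) = coeffForm c z := by
  rw [coeffForm_apply, coeffForm_apply]
  refine Fintype.sum_equiv (σ.arrowCongr (Equiv.refl κ)) _ _ fun i => ?_
  change c i * ∏ k, z (σ k) (i k) = c (i ∘ σ.symm) * ∏ k, z k (i (σ.symm k))
  rw [hc σ.symm, ← Equiv.prod_comp σ (fun k => z k (i (σ.symm k)))]
  simp

end CoeffForm

section SymmCoeff

variable {𝕜 ι κ : Type*} [Fintype ι] [DecidableEq ι] [Fintype κ] [DecidableEq κ]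

def symmCoeff [DivisionRing 𝕜] (a : (κ → ℕ) → 𝕜) (i : ι → κ) : 𝕜 :=
  a (multiIndex i) / #{i' : ι → κ | multiIndex i' = multiIndex i}

theorem symmCoeff_comp_perm [DivisionRing 𝕜] (a : (κ → ℕ) → 𝕜) (σ : Equiv.Perm ι) (i : ι → κ) :
    symmCoeff a (i ∘ σ) = symmCoeff a i := by
  simp only [symmCoeff, multiIndex_comp_perm]

theorem norm_le_factorial_mul_norm_symmCoeff [RCLike 𝕜] (a : (κ → ℕ) → 𝕜) (i : ι → κ) :
    ‖a (multiIndex i)‖ ≤ (Fintype.card ι).factorial * ‖symmCoeff a i‖ := by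
  have hpos : 0 < #{i' : ι → κ | multiIndex i' = multiIndex i} :=
    card_pos.mpr ⟨i, mem_filter.mpr ⟨mem_univ _, rfl⟩⟩
  rw [symmCoeff, norm_div, RCLike.norm_natCast, mul_div_assoc',
    le_div_iff₀ (by exact_mod_cast hpos), mul_comm]
  gcongr
  exact_mod_cast card_multiIndex_fiber_le _

theorem coeffForm_symmCoeff_diag [NontriviallyNormedField 𝕜] [CharZero 𝕜] {m n : ℕ}
    (a : (Fin n → ℕ) → 𝕜) (w : Fin n → 𝕜) :
    coeffForm (symmCoeff (ι := Fin m) a) (fun _ => w) =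
      ∑ α ∈ Nat.antidiagonalTuple n m, a α * ∏ j, w j ^ α j := by
  rw [coeffForm_apply]
  simp_rw [prod_comp_eq_prod_pow_multiIndex w]
  rw [← sum_fiberwise_of_maps_to (g := multiIndex) (t := Nat.antidiagonalTuple n m) fun i _ =>
    multiIndex_mem_antidiagonalTuple i]
  refine sum_congr rfl fun α hα => ?_
  obtain ⟨i₀, hi₀⟩ := exists_multiIndex_eq (ι := Fin m) α
    (by simpa using Nat.mem_antidiagonalTuple.mp hα)
  have hN : (#{i : Fin m → Fin n | multiIndex i = α} : 𝕜) ≠ 0 :=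
    Nat.cast_ne_zero.mpr (card_pos.mpr ⟨i₀, mem_filter.mpr ⟨mem_univ _, hi₀⟩⟩).ne'
  calc _ = ∑ _i ∈ {i : Fin m → Fin n | multiIndex i = α},
        a α / #{i : Fin m → Fin n | multiIndex i = α} * ∏ j, w j ^ α j :=
        sum_congr rfl fun i hi => by rw [symmCoeff, (mem_filter.mp hi).2]
    _ = a α * ∏ j, w j ^ α j := by
        rw [sum_const, nsmul_eq_mul]
        field_simp

theorem rpow_sum_norm_rpow_le_factorial_mul [RCLike 𝕜] {m n : ℕ} (a : (Fin n → ℕ) → 𝕜) {q : ℝ}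
    (hq : 0 < q) :
    (∑ α ∈ Nat.antidiagonalTuple n m, ‖a α‖ ^ q) ^ (1 / q) ≤
      m.factorial * (∑ i : Fin m → Fin n, ‖symmCoeff a i‖ ^ q) ^ (1 / q) := by
  have hsum : ∑ α ∈ Nat.antidiagonalTuple n m, ‖a α‖ ^ q ≤
      (m.factorial : ℝ) ^ q * ∑ i : Fin m → Fin n, ‖symmCoeff a i‖ ^ q := by
    rw [← sum_fiberwise_of_maps_to (g := multiIndex) (t := Nat.antidiagonalTuple n m) fun i _ =>
      multiIndex_mem_antidiagonalTuple i, mul_sum]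
    refine sum_le_sum fun α hα => ?_
    obtain ⟨i, rfl⟩ := exists_multiIndex_eq (ι := Fin m) α
      (by simpa using Nat.mem_antidiagonalTuple.mp hα)
    calc ‖a (multiIndex i)‖ ^ q ≤ (m.factorial * ‖symmCoeff a i‖) ^ q := by
          gcongr
          simpa using norm_le_factorial_mul_norm_symmCoeff a i
      _ = (m.factorial : ℝ) ^ q * ‖symmCoeff a i‖ ^ q := by
          rw [Real.mul_rpow (by positivity) (norm_nonneg _)]
      _ ≤ _ := by
          gcongr
          exact single_le_sum (f := fun i => ‖symmCoeff a i‖ ^ q) (fun _ _ => by positivity)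
            (mem_filter.mpr ⟨mem_univ _, rfl⟩)
  calc _ ≤ ((m.factorial : ℝ) ^ q * ∑ i : Fin m → Fin n, ‖symmCoeff a i‖ ^ q) ^ (1 / q) := by
        gcongr
    _ = _ := by
        rw [Real.mul_rpow (by positivity) (by positivity), ← Real.rpow_mul (by positivity),
          mul_one_div_cancel hq.ne', Real.rpow_one]

end SymmCoeff

theorem polydisc_eq_closedBall (n : ℕ) :
    {z : Fin n → ℂ | ∀ i, ‖z i‖ ≤ 1} = Metric.closedBall 0 1 := by
  ext z
  simp [pi_norm_le_iff_of_nonneg]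

theorem norm_le_polydiscSup {n : ℕ} {f : (Fin n → ℂ) → ℂ} (hf : Continuous f) {z : Fin n → ℂ}
    (hz : ‖z‖ ≤ 1) : ‖f z‖ ≤ polydiscSup n f := by
  rw [polydiscSup, polydisc_eq_closedBall]
  exact le_csSup ((isCompact_closedBall 0 1).image (continuous_norm.comp hf)).bddAbove
    (Set.mem_image_of_mem _ (mem_closedBall_zero_iff.mpr hz))

theorem multilinearPolydiscSup_le {m n : ℕ}
    {T : ContinuousMultilinearMap ℂ (fun _ : Fin m => (Fin n → ℂ)) ℂ} {B : ℝ}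
    (hB : ∀ z : Fin m → Fin n → ℂ, (∀ k, ‖z k‖ ≤ 1) → ‖T z‖ ≤ B) :
    multilinearPolydiscSup m n T ≤ B := by
  refine csSup_le ⟨_, Set.mem_image_of_mem _ (fun k i => by simp : (0 : Fin m → Fin n → ℂ) ∈ _)⟩
    ?_
  rintro _ ⟨z, hz, rfl⟩
  exact hB z fun k => (pi_norm_le_iff_of_nonneg zero_le_one).mpr (hz k)

theorem factorial_mul_multilinearPolydiscSup_le {m n : ℕ} (hm : 1 ≤ m)
    (T : ContinuousMultilinearMap ℂ (fun _ : Fin m => (Fin n → ℂ)) ℂ)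
    (hT : ∀ (σ : Equiv.Perm (Fin m)) (z : Fin m → Fin n → ℂ), T (z ∘ σ) = T z) :
    m.factorial * multilinearPolydiscSup m n T ≤
      m ^ m * polydiscSup n (fun w => T fun _ => w) := by
  have : Nonempty (Fin m) := ⟨⟨0, hm⟩⟩
  have hcont : Continuous fun w : Fin n → ℂ => T fun _ => w :=
    T.cont.comp (continuous_pi fun _ => continuous_id)
  rw [← le_div_iff₀' (by positivity)]
  refine multilinearPolydiscSup_le fun z hz => (le_div_iff₀' (by positivity)).mpr ?_
  simpa using T.toMultilinearMap.factorial_mul_norm_le_of_norm_diag_le hT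
    (fun v hv => norm_le_polydiscSup hcont hv) hz

/-- **The multilinear Bohnenblust–Hille inequality with exponent `q` implies the
polynomial Bohnenblust–Hille inequality with the same exponent `q`.** -/
theorem multilinear_BH_implies_polynomial_BH (m : ℕ) (hm : 1 ≤ m) (q : ℝ)
    (hq0 : 0 < q)
    (hmulti : ∃ C : ℝ, 0 < C ∧ ∀ n : ℕ, 1 ≤ n →
      ∀ T : ContinuousMultilinearMap ℂ (fun _ : Fin m => (Fin n → ℂ)) ℂ,
        (∑ i : Fin m → Fin n,
            ‖T (fun k => Pi.single (i k) 1)‖ ^ q) ^ (1 / q)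
          ≤ C * multilinearPolydiscSup m n T) :
    ∃ C' : ℝ, 0 < C' ∧ ∀ n : ℕ, 1 ≤ n → ∀ a : (Fin n → ℕ) → ℂ,
      (∑ α ∈ Finset.Nat.antidiagonalTuple n m, ‖a α‖ ^ q) ^ (1 / q)
        ≤ C' * polydiscSup n (fun z =>
            ∑ α ∈ Finset.Nat.antidiagonalTuple n m, a α * ∏ i, z i ^ α i) := by
  obtain ⟨C, hC, hBH⟩ := hmulti
  refine ⟨C * m ^ m, by positivity, fun n hn a => ?_⟩
  set T := coeffForm (symmCoeff (ι := Fin m) a)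
  have hdiag : (fun z => ∑ α ∈ Finset.Nat.antidiagonalTuple n m, a α * ∏ i, z i ^ α i) =
      fun z => T fun _ => z :=
    funext fun z => (coeffForm_symmCoeff_diag a z).symm
  have hsup := factorial_mul_multilinearPolydiscSup_le hm T
    (coeffForm_comp_perm (symmCoeff_comp_perm a))
  rw [hdiag]
  calc _ ≤ m.factorial * (∑ i : Fin m → Fin n, ‖symmCoeff a i‖ ^ q) ^ (1 / q) :=
        rpow_sum_norm_rpow_le_factorial_mul a hq0
    _ = m.factorial *
          (∑ i : Fin m → Fin n, ‖T (fun k => Pi.single (i k) 1)‖ ^ q) ^ (1 / q) := by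
        simp only [T, coeffForm_single]
    _ ≤ m.factorial * (C * multilinearPolydiscSup m n T) := by gcongr; exact hBH n hn T
    _ ≤ C * m ^ m * polydiscSup n (fun z => T fun _ => z) := by
        linarith [mul_le_mul_of_nonneg_left hsup hC.le]
end
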